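/- Let φ₀, φ, ε, δ ∈ ℝ and τ > 0. Define n_+ = (cos(ε/2), e^{iδ} sin(ε/2)), n_− = (−sin(ε/2), e^{iδ} cos(ε/2)) in ℂ², P_± = |n_±⟩⟨n_±|, and H_SA,ξ = (φ₀/(2τ))( cos ξ · σ_y − sin ξ · σ_x ) for ξ ∈ {0, φ}. Then: (i) the single-qubit shortcut gate Hamiltonian H_SA,sg = P_+ ⊗ H_SA,0 + P_− ⊗ H_SA,φ (4×4) satisfies Tr[H_SA,sg²] = φ₀²/τ²; (ii) the controlled-gate shortcut Hamiltonian H_SA,cg = (I₄ − P_{1−}) ⊗ H_SA,0 + P_{1−} ⊗ H_SA,φ (8×8), where P_{1−} = (|e₁⟩⟨e₁|) ⊗ P_− with e₁ = (0,1) ∈ ℂ² and I₄ the 4×4 identity, satisfies Tr[H_SA,cg²] = 2φ₀²/τ². Hence the Hilbert–Schmidt energy cost of the controlled gate is √2 times that of the single-qubit gate: √(Tr[H_SA,cg²]) = √2 · √(Tr[H_SA,sg²]). -/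
import Mathlib
open Matrix Complex Kronecker

noncomputable def σx : Matrix (Fin 2) (Fin 2) ℂ := !![0, 1; 1, 0]
noncomputable def σy : Matrix (Fin 2) (Fin 2) ℂ := !![0, -Complex.I; Complex.I, 0]

/-- The outer-product matrix `|u⟩⟨v| = u v†`, with entries `u_a · conj(v_b)`. -/
noncomputable def outer (u v : Fin 2 → ℂ) : Matrix (Fin 2) (Fin 2) ℂ :=
  Matrix.of fun a b => u a * (starRingEnd ℂ) (v b)

/-- The shortcut gate Hamiltonian `H_SA,ξ = (φ₀/(2τ))(cos ξ σ_y − sin ξ σ_x)`. -/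
noncomputable def HSAgate (φ₀ τ ξ : ℝ) : Matrix (Fin 2) (Fin 2) ℂ :=
  ((φ₀ / (2 * τ) : ℝ) : ℂ) • ((Real.cos ξ : ℂ) • σy - (Real.sin ξ : ℂ) • σx)

lemma outer_mul_outer (u v w x : Fin 2 → ℂ) :
    outer u v * outer w x
      = ((starRingEnd ℂ) (v 0) * w 0 + (starRingEnd ℂ) (v 1) * w 1) • outer u x := by
  ext a b
  simp [outer, Matrix.mul_apply, Fin.sum_univ_succ, Matrix.smul_apply]
  ring

lemma trace_outer (u v : Fin 2 → ℂ) :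
    Matrix.trace (outer u v) = u 0 * (starRingEnd ℂ) (v 0) + u 1 * (starRingEnd ℂ) (v 1) := by
  simp [outer, Matrix.trace, Matrix.diag, Fin.sum_univ_succ]

lemma trace_HSAgate_sq (φ₀ τ ξ : ℝ) :
    Matrix.trace (HSAgate φ₀ τ ξ * HSAgate φ₀ τ ξ) = ((φ₀ ^ 2 / (2 * τ ^ 2) : ℝ) : ℂ) := by
  have h := Real.sin_sq_add_cos_sq ξ
  simp [HSAgate, σx, σy, Matrix.trace, Matrix.diag, Matrix.mul_apply, Fin.sum_univ_succ,
    Matrix.smul_apply, Matrix.sub_apply]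
  push_cast
  ring_nf
  have h2 : Complex.sin (ξ : ℂ) ^ 2 = 1 - Complex.cos (ξ : ℂ) ^ 2 := by
    linear_combination Complex.sin_sq_add_cos_sq (ξ : ℂ)
  rw [Complex.I_sq, h2]
  ring

/-- (i) The single-qubit shortcut gate Hamiltonian `H_SA,sg = P₊ ⊗ H_SA,0 + P₋ ⊗ H_SA,φ`
satisfies `Tr[H_SA,sg²] = φ₀²/τ²`; (ii) the controlled-gate shortcut Hamiltonian
`H_SA,cg = (I₄ − P_{1−}) ⊗ H_SA,0 + P_{1−} ⊗ H_SA,φ`, with `P_{1−} = |e₁⟩⟨e₁| ⊗ P₋`,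
satisfies `Tr[H_SA,cg²] = 2φ₀²/τ²`. Hence the Hilbert–Schmidt energy cost of the
controlled gate is `√2` times that of the single-qubit gate. -/
theorem shortcut_gate_hamiltonian_cost (φ₀ φ ε δ τ : ℝ) (hτ : 0 < τ)
    (nplus nminus e₁ : Fin 2 → ℂ)
    (hnp : nplus = ![(Real.cos (ε / 2) : ℂ),
      Complex.exp (Complex.I * (δ : ℂ)) * (Real.sin (ε / 2) : ℂ)])
    (hnm : nminus = ![-(Real.sin (ε / 2) : ℂ),
      Complex.exp (Complex.I * (δ : ℂ)) * (Real.cos (ε / 2) : ℂ)])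
    (he₁ : e₁ = ![0, 1])
    (HSAsg : Matrix (Fin 2 × Fin 2) (Fin 2 × Fin 2) ℂ)
    (hHSAsg : HSAsg = (outer nplus nplus) ⊗ₖ (HSAgate φ₀ τ 0)
      + (outer nminus nminus) ⊗ₖ (HSAgate φ₀ τ φ))
    (P1m : Matrix (Fin 2 × Fin 2) (Fin 2 × Fin 2) ℂ)
    (hP1m : P1m = (outer e₁ e₁) ⊗ₖ (outer nminus nminus))
    (HSAcg : Matrix ((Fin 2 × Fin 2) × Fin 2) ((Fin 2 × Fin 2) × Fin 2) ℂ)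
    (hHSAcg : HSAcg = ((1 : Matrix (Fin 2 × Fin 2) (Fin 2 × Fin 2) ℂ) - P1m) ⊗ₖ (HSAgate φ₀ τ 0)
      + P1m ⊗ₖ (HSAgate φ₀ τ φ)) :
    Matrix.trace (HSAsg * HSAsg) = ((φ₀ ^ 2 / τ ^ 2 : ℝ) : ℂ) ∧
    Matrix.trace (HSAcg * HSAcg) = ((2 * φ₀ ^ 2 / τ ^ 2 : ℝ) : ℂ) ∧
    Real.sqrt ((Matrix.trace (HSAcg * HSAcg)).re)
      = Real.sqrt 2 * Real.sqrt ((Matrix.trace (HSAsg * HSAsg)).re) := by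
  have hτC : (τ : ℂ) ≠ 0 := Complex.ofReal_ne_zero.mpr hτ.ne'
  have hz : (starRingEnd ℂ) (Complex.exp (Complex.I * (δ : ℂ)))
      * Complex.exp (Complex.I * (δ : ℂ)) = 1 := by
    rw [← Complex.exp_conj, ← Complex.exp_add]
    simp
  have hsc : ((Real.sin (ε / 2) : ℂ)) ^ 2 + ((Real.cos (ε / 2) : ℂ)) ^ 2 = 1 := by
    exact_mod_cast congrArg (fun x : ℝ => (x : ℂ)) (Real.sin_sq_add_cos_sq (ε / 2))
  -- scalar inner products
  have imm : (starRingEnd ℂ) (nminus 0) * nminus 0 + (starRingEnd ℂ) (nminus 1) * nminus 1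
      = 1 := by
    subst hnm
    simp only [Matrix.cons_val_zero, Matrix.cons_val_one, Matrix.head_cons, map_neg,
      Complex.conj_ofReal, map_mul (starRingEnd ℂ)]
    linear_combination ((Real.cos (ε / 2) : ℂ)) ^ 2 * hz + hsc
  have ipp : (starRingEnd ℂ) (nplus 0) * nplus 0 + (starRingEnd ℂ) (nplus 1) * nplus 1
      = 1 := by
    subst hnp
    simp only [Matrix.cons_val_zero, Matrix.cons_val_one, Matrix.head_cons,
      Complex.conj_ofReal, map_mul (starRingEnd ℂ)]
    linear_combination ((Real.sin (ε / 2) : ℂ)) ^ 2 * hz + hsc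
  have ipm : (starRingEnd ℂ) (nplus 0) * nminus 0 + (starRingEnd ℂ) (nplus 1) * nminus 1
      = 0 := by
    subst hnp hnm
    simp only [Matrix.cons_val_zero, Matrix.cons_val_one, Matrix.head_cons,
      Complex.conj_ofReal, map_mul (starRingEnd ℂ)]
    linear_combination ((Real.sin (ε / 2) : ℂ)) * ((Real.cos (ε / 2) : ℂ)) * hz
  have imp : (starRingEnd ℂ) (nminus 0) * nplus 0 + (starRingEnd ℂ) (nminus 1) * nplus 1
      = 0 := by
    subst hnp hnm
    simp only [Matrix.cons_val_zero, Matrix.cons_val_one, Matrix.head_cons, map_neg,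
      Complex.conj_ofReal, map_mul (starRingEnd ℂ)]
    linear_combination ((Real.sin (ε / 2) : ℂ)) * ((Real.cos (ε / 2) : ℂ)) * hz
  have iee : (starRingEnd ℂ) (e₁ 0) * e₁ 0 + (starRingEnd ℂ) (e₁ 1) * e₁ 1 = 1 := by
    subst he₁; simp
  -- projector matrix identities
  set Pp := outer nplus nplus with hPp
  set Pm := outer nminus nminus with hPm
  set Q := outer e₁ e₁ with hQ
  have hPpPp : Pp * Pp = Pp := by rw [hPp, outer_mul_outer, ipp, one_smul]
  have hPmPm : Pm * Pm = Pm := by rw [hPm, outer_mul_outer, imm, one_smul]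
  have hPpPm : Pp * Pm = 0 := by rw [hPp, hPm, outer_mul_outer, ipm, zero_smul]
  have hPmPp : Pm * Pp = 0 := by rw [hPm, hPp, outer_mul_outer, imp, zero_smul]
  have hQQ : Q * Q = Q := by rw [hQ, outer_mul_outer, iee, one_smul]
  have htrPm : Matrix.trace Pm = 1 := by
    rw [hPm, trace_outer]
    calc nminus 0 * (starRingEnd ℂ) (nminus 0) + nminus 1 * (starRingEnd ℂ) (nminus 1)
        = (starRingEnd ℂ) (nminus 0) * nminus 0 + (starRingEnd ℂ) (nminus 1) * nminus 1 := by
          ring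
      _ = 1 := imm
  have htrPp : Matrix.trace Pp = 1 := by
    rw [hPp, trace_outer]
    calc nplus 0 * (starRingEnd ℂ) (nplus 0) + nplus 1 * (starRingEnd ℂ) (nplus 1)
        = (starRingEnd ℂ) (nplus 0) * nplus 0 + (starRingEnd ℂ) (nplus 1) * nplus 1 := by ring
      _ = 1 := ipp
  have htrQ : Matrix.trace Q = 1 := by
    rw [hQ, trace_outer]
    calc e₁ 0 * (starRingEnd ℂ) (e₁ 0) + e₁ 1 * (starRingEnd ℂ) (e₁ 1)
        = (starRingEnd ℂ) (e₁ 0) * e₁ 0 + (starRingEnd ℂ) (e₁ 1) * e₁ 1 := by ring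
      _ = 1 := iee
  -- (i) single-qubit gate
  have part1 : Matrix.trace (HSAsg * HSAsg) = ((φ₀ ^ 2 / τ ^ 2 : ℝ) : ℂ) := by
    rw [hHSAsg]
    simp only [add_mul, mul_add, ← Matrix.mul_kronecker_mul, Matrix.trace_add,
      Matrix.trace_kronecker, hPpPp, hPmPm, hPpPm, hPmPp, htrPp, htrPm,
      Matrix.trace_zero, zero_mul, one_mul, trace_HSAgate_sq]
    push_cast
    field_simp
    ring
  -- (ii) controlled gate
  have hPP : P1m * P1m = P1m := by
    rw [hP1m, ← Matrix.mul_kronecker_mul, hQQ, hPmPm]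
  have htrP : Matrix.trace P1m = 1 := by
    rw [hP1m, Matrix.trace_kronecker, htrQ, htrPm, one_mul]
  have h1P : ((1 : Matrix (Fin 2 × Fin 2) (Fin 2 × Fin 2) ℂ) - P1m)
      * ((1 : Matrix (Fin 2 × Fin 2) (Fin 2 × Fin 2) ℂ) - P1m)
      = (1 : Matrix (Fin 2 × Fin 2) (Fin 2 × Fin 2) ℂ) - P1m := by
    rw [sub_mul, mul_sub, mul_sub, one_mul, mul_one, hPP]
    simp
  have h1PP : ((1 : Matrix (Fin 2 × Fin 2) (Fin 2 × Fin 2) ℂ) - P1m) * P1m = 0 := by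
    rw [sub_mul, one_mul, hPP, sub_self]
  have hPP1 : P1m * ((1 : Matrix (Fin 2 × Fin 2) (Fin 2 × Fin 2) ℂ) - P1m) = 0 := by
    rw [mul_sub, mul_one, hPP, sub_self]
  have htr1P : Matrix.trace ((1 : Matrix (Fin 2 × Fin 2) (Fin 2 × Fin 2) ℂ) - P1m) = 3 := by
    rw [Matrix.trace_sub, Matrix.trace_one, htrP]
    simp
    norm_num
  have part2 : Matrix.trace (HSAcg * HSAcg) = ((2 * φ₀ ^ 2 / τ ^ 2 : ℝ) : ℂ) := by
    rw [hHSAcg]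
    simp only [add_mul, mul_add, ← Matrix.mul_kronecker_mul, Matrix.trace_add,
      Matrix.trace_kronecker, h1P, h1PP, hPP1, hPP, htr1P, htrP,
      Matrix.trace_zero, zero_mul, one_mul, trace_HSAgate_sq]
    push_cast
    field_simp
    ring
  refine ⟨part1, part2, ?_⟩
  rw [part1, part2, Complex.ofReal_re, Complex.ofReal_re,
    show (2 * φ₀ ^ 2 / τ ^ 2 : ℝ) = 2 * (φ₀ ^ 2 / τ ^ 2) by ring,
    Real.sqrt_mul (by norm_num)]
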